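/- (Quadratic variation rate identity, from the proof of Proposition 2.1(b).) For every real q > 0 with q ≠ 1, every real j such that [2j]_q ≠ 0, and all real a, b, one has (q² − 1)²·c⁺_q(a,b) + (q⁻² − 1)²·c⁻_q(a,b) = (1/(2[2j]_q))·[ ((q² − 1)/(q − q⁻¹))·(q^{2a} − q^{−2j})·(q^{−2b} − q^{−2j}) − ((q⁻² − 1)/(q − q⁻¹))·(q^{2j} − q^{2a})·(q^{2j} − q^{−2b}) ]. -/

import Mathlib

/-- The `q`-number `[n]_q = (q^n - q^(-n))/(q - q⁻¹)` for real `n`. -/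
noncomputable def qNum (q n : ℝ) : ℝ := (q ^ n - q ^ (-n)) / (q - q⁻¹)

/-- ASEP(q,j) jump rate from `x` to `x+1`. -/
noncomputable def cPlus (q j a b : ℝ) : ℝ :=
  (1 / (2 * qNum q (2*j))) * q ^ (a - b - (2*j + 1)) * qNum q (j + a) * qNum q (j - b)

/-- ASEP(q,j) jump rate from `x+1` to `x`. -/
noncomputable def cMinus (q j a b : ℝ) : ℝ :=
  (1 / (2 * qNum q (2*j))) * q ^ (a - b + (2*j + 1)) * qNum q (j - a) * qNum q (j + b)

/-!
Expanding the q-numbers, `q^(a-b-2j-1) [j+a]_q [j-b]_q` collapses to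
`(q^(2a) - q^(-2j)) (q^(-2b) - q^(-2j)) / (q (q - q⁻¹)²)`, and symmetrically for `c⁻`.
The identity then reduces to `(q² - 1)² / (q (q - q⁻¹)²) = q = (q² - 1) / (q - q⁻¹)` and
`(q⁻² - 1)² q / (q - q⁻¹)² = q⁻¹ = -(q⁻² - 1) / (q - q⁻¹)`.
-/

theorem cPlus_eq {q : ℝ} (hq : 0 < q) (j a b : ℝ) :
    cPlus q j a b = 1 / (2 * qNum q (2*j)) *
      ((q ^ (2*a) - q ^ (-2*j)) * (q ^ (-2*b) - q ^ (-2*j)) / (q * (q - q⁻¹) ^ 2)) := by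
  simp only [cPlus, qNum, two_mul, neg_mul, Real.rpow_add hq, Real.rpow_sub hq,
    Real.rpow_neg hq.le, Real.rpow_one]
  field_simp

theorem cMinus_eq {q : ℝ} (hq : 0 < q) (j a b : ℝ) :
    cMinus q j a b = 1 / (2 * qNum q (2*j)) *
      (q * (q ^ (2*j) - q ^ (2*a)) * (q ^ (2*j) - q ^ (-2*b)) / (q - q⁻¹) ^ 2) := by
  simp only [cMinus, qNum, two_mul, neg_mul, Real.rpow_add hq, Real.rpow_sub hq,
    Real.rpow_neg hq.le, Real.rpow_one]
  field_simp

theorem stmt3 (q : ℝ) (hq : 0 < q) (j : ℝ)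
    (a b : ℝ) :
    (q ^ (2:ℝ) - 1)^2 * cPlus q j a b + (q ^ (-2:ℝ) - 1)^2 * cMinus q j a b
      = (1 / (2 * qNum q (2*j)))
        * ( ((q ^ (2:ℝ) - 1) / (q - q⁻¹))
              * (q ^ (2*a) - q ^ (-2*j)) * (q ^ (-2*b) - q ^ (-2*j))
          - ((q ^ (-2:ℝ) - 1) / (q - q⁻¹))
              * (q ^ (2*j) - q ^ (2*a)) * (q ^ (2*j) - q ^ (-2*b)) ) := by
  rcases eq_or_ne q 1 with rfl | hq1
  · -- at `q = 1` every q-number is `x / 0 = 0`, so both sides vanish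
    simp [cPlus, cMinus, qNum]
  have hq2 : q ^ 2 - 1 ≠ 0 :=
    sub_ne_zero.2 ((pow_eq_one_iff_of_nonneg hq.le two_ne_zero).not.2 hq1)
  rw [cPlus_eq hq, cMinus_eq hq, Real.rpow_neg hq.le, Real.rpow_two]
  generalize 1 / (2 * qNum q (2*j)) = k
  field_simp
  ring
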